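/- If x* is an optimal solution of min_x ||Ax - b||_2 + Σ_i λ_i|x_i| with Ax* ≠ b, then u* = (Ax* - b)/||Ax* - b||_2 is optimal for the dual problem max{-b^T u : ||u||_2 ≤ 1, |a_i^T u| ≤ λ_i ∀i}; in particular u* is dual feasible and -b^T u* = ||Ax* - b||_2 + Σ_i λ_i|x*_i|. -/

import Mathlib

/-!
Write `r = A x* - b`. Moving from `x*` to `x* + t d` changes `‖A x - b‖₂` to first order by
`t ⟪r, A d⟫ / ‖r‖` and the penalty by at most `t ∑ λᵢ |dᵢ|`, so optimality of `x*` gives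
`|⟪A d, u*⟫| ≤ ∑ λᵢ |dᵢ|`. Coordinate directions `d = eᵢ` make `u*` dual feasible, and the
directions `d = ±x*` give `⟪A x*, u*⟫ = -∑ λᵢ |x*ᵢ|`; since `b = A x* - r` this yields
`-⟪b, u*⟫ = ‖r‖ + ∑ λᵢ |x*ᵢ|`. Weak duality `-⟪b, u⟫ ≤ ‖A x - b‖ + ∑ λᵢ |xᵢ|` for every feasible
`u` and every `x` then makes `u*` dual optimal.
-/

noncomputable def norm2 {m : ℕ} (v : Fin m → ℝ) : ℝ := Real.sqrt (∑ k, v k ^ 2)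
noncomputable def dot {m : ℕ} (u v : Fin m → ℝ) : ℝ := ∑ k, u k * v k

open Filter Topology Matrix
open scoped InnerProductSpace

section InnerProductSpace

variable {E : Type*} [NormedAddCommGroup E] [InnerProductSpace ℝ E]

/-- AM-GM `2 ‖r‖ ‖r + t • v‖ ≤ ‖r‖² + ‖r + t • v‖²` bounds the norm by a quadratic in `t`, so no
differentiability of the norm (which fails at `r = 0`) is needed. -/
theorem neg_mul_norm_le_inner_of_eventually_norm_le {r v : E} {c : ℝ}
    (h : ∀ᶠ t in 𝓝[>] (0 : ℝ), ‖r‖ ≤ ‖r + t • v‖ + c * t) :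
    -(c * ‖r‖) ≤ ⟪v, r⟫_ℝ := by
  set a := 2 * (⟪v, r⟫_ℝ + c * ‖r‖)
  have hslope : ∀ᶠ t in 𝓝[>] (0 : ℝ), 0 ≤ a + t * ‖v‖ ^ 2 := by
    filter_upwards [h, self_mem_nhdsWithin] with t ht (htpos : 0 < t)
    have hexpand : ‖r + t • v‖ ^ 2 = ‖r‖ ^ 2 + 2 * t * ⟪v, r⟫_ℝ + t ^ 2 * ‖v‖ ^ 2 := by
      rw [norm_add_sq_real, inner_smul_right, norm_smul, mul_pow, Real.norm_eq_abs, sq_abs,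
        real_inner_comm]
      ring
    have hamgm := two_mul_le_add_sq ‖r‖ ‖r + t • v‖
    have hscaled := mul_le_mul_of_nonneg_left ht (norm_nonneg r)
    refine nonneg_of_mul_nonneg_right ?_ htpos
    nlinarith
  have hlim : Tendsto (fun t : ℝ => a + t * ‖v‖ ^ 2) (𝓝[>] 0) (𝓝 a) := by
    have hcont : Continuous fun t : ℝ => a + t * ‖v‖ ^ 2 := by fun_prop
    simpa using (hcont.tendsto 0).mono_left nhdsWithin_le_nhds
  linarith [ge_of_tendsto hlim hslope]

end InnerProductSpace

section EuclideanVectors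

variable {m : ℕ}

theorem norm2_eq_norm (v : Fin m → ℝ) :
    norm2 v = ‖(WithLp.toLp 2 v : EuclideanSpace ℝ (Fin m))‖ := by
  simp [norm2, EuclideanSpace.norm_eq]

theorem dot_eq_inner (u v : Fin m → ℝ) :
    dot u v = ⟪(WithLp.toLp 2 u : EuclideanSpace ℝ (Fin m)), WithLp.toLp 2 v⟫_ℝ := by
  simp [dot, PiLp.inner_apply, mul_comm]

theorem norm2_nonneg (v : Fin m → ℝ) : 0 ≤ norm2 v := Real.sqrt_nonneg _

theorem dot_eq_dotProduct (u v : Fin m → ℝ) : dot u v = u ⬝ᵥ v := rfl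

theorem norm2_pos_iff {v : Fin m → ℝ} : 0 < norm2 v ↔ v ≠ 0 := by
  simp [norm2_eq_norm]

theorem norm2_smul (c : ℝ) (v : Fin m → ℝ) : norm2 (c • v) = |c| * norm2 v := by
  rw [norm2_eq_norm, norm2_eq_norm, WithLp.toLp_smul, norm_smul, Real.norm_eq_abs]

theorem dot_self_eq_norm2_sq (v : Fin m → ℝ) : dot v v = norm2 v ^ 2 := by
  rw [dot_eq_inner, norm2_eq_norm, real_inner_self_eq_norm_sq]

theorem dot_le_norm2_mul_norm2 (u v : Fin m → ℝ) : dot u v ≤ norm2 u * norm2 v := by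
  rw [dot_eq_inner, norm2_eq_norm, norm2_eq_norm]
  exact real_inner_le_norm _ _

theorem neg_mul_norm2_le_dot_of_eventually_norm2_le {r v : Fin m → ℝ} {c : ℝ}
    (h : ∀ᶠ t in 𝓝[>] (0 : ℝ), norm2 r ≤ norm2 (r + t • v) + c * t) :
    -(c * norm2 r) ≤ dot v r := by
  simp only [norm2_eq_norm, dot_eq_inner, WithLp.toLp_add, WithLp.toLp_smul] at h ⊢
  exact neg_mul_norm_le_inner_of_eventually_norm_le h

end EuclideanVectors

section SqrtLasso

variable {m n : ℕ} (A : Matrix (Fin m) (Fin n) ℝ) (b : Fin m → ℝ) (lam : Fin n → ℝ)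

noncomputable def sqrtLasso (x : Fin n → ℝ) : ℝ :=
  norm2 (A *ᵥ x - b) + ∑ i, lam i * |x i|

def IsSqrtLassoDualFeasible (u : Fin m → ℝ) : Prop :=
  norm2 u ≤ 1 ∧ ∀ i, |dot (fun k => A k i) u| ≤ lam i

theorem dot_mulVec_eq_sum_mul_dot_col (x : Fin n → ℝ) (u : Fin m → ℝ) :
    dot (A *ᵥ x) u = ∑ i, x i * dot (fun k => A k i) u := by
  rw [dot_eq_dotProduct, dotProduct_comm, dotProduct_mulVec, dotProduct_comm]
  simp [dotProduct, dot, vecMul, mul_comm]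

theorem neg_dot_le_sqrtLasso {u : Fin m → ℝ} (hu : IsSqrtLassoDualFeasible A lam u)
    (x : Fin n → ℝ) : -dot b u ≤ sqrtLasso A b lam x := by
  have hsplit : -dot b u = dot (A *ᵥ x - b) u - dot (A *ᵥ x) u := by
    simp only [dot_eq_dotProduct, sub_dotProduct]
    ring
  have hres : dot (A *ᵥ x - b) u ≤ norm2 (A *ᵥ x - b) :=
    (dot_le_norm2_mul_norm2 _ u).trans (mul_le_of_le_one_right (norm2_nonneg _) hu.1)
  have hcols : -dot (A *ᵥ x) u ≤ ∑ i, lam i * |x i| := by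
    rw [dot_mulVec_eq_sum_mul_dot_col, ← Finset.sum_neg_distrib]
    refine Finset.sum_le_sum fun i _ => ?_
    calc -(x i * dot (fun k => A k i) u) ≤ |x i| * |dot (fun k => A k i) u| := by
          rw [← abs_mul]; exact neg_le_abs _
      _ ≤ |x i| * lam i := mul_le_mul_of_nonneg_left (hu.2 i) (abs_nonneg _)
      _ = lam i * |x i| := mul_comm _ _
  rw [hsplit, sqrtLasso]
  linarith

theorem sum_mul_abs_add_smul_le (hlam : ∀ i, 0 ≤ lam i) (x d : Fin n → ℝ) {t : ℝ} (ht : 0 ≤ t) :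
    ∑ i, lam i * |(x + t • d) i| ≤ ∑ i, lam i * |x i| + (∑ i, lam i * |d i|) * t := by
  rw [Finset.sum_mul, ← Finset.sum_add_distrib]
  refine Finset.sum_le_sum fun i _ => ?_
  have htri : |x i + t * d i| ≤ |x i| + t * |d i| := by
    simpa [abs_mul, abs_of_nonneg ht] using abs_add_le (x i) (t * d i)
  simpa [mul_add, mul_comm, mul_left_comm] using mul_le_mul_of_nonneg_left htri (hlam i)

variable {A b lam} {xstar : Fin n → ℝ}

theorem neg_mul_norm2_le_dot_mulVec_residual
    (hopt : ∀ x, sqrtLasso A b lam xstar ≤ sqrtLasso A b lam x) (d : Fin n → ℝ) {c : ℝ}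
    (hd : ∀ᶠ t in 𝓝[>] (0 : ℝ),
      ∑ i, lam i * |(xstar + t • d) i| ≤ ∑ i, lam i * |xstar i| + c * t) :
    -(c * norm2 (A *ᵥ xstar - b)) ≤ dot (A *ᵥ d) (A *ᵥ xstar - b) := by
  refine neg_mul_norm2_le_dot_of_eventually_norm2_le ?_
  filter_upwards [hd] with t ht
  have hmin := hopt (xstar + t • d)
  rw [sqrtLasso, sqrtLasso, mulVec_add, mulVec_smul, add_sub_right_comm] at hmin
  linarith

theorem abs_dot_mulVec_residual_le (hlam : ∀ i, 0 ≤ lam i)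
    (hopt : ∀ x, sqrtLasso A b lam xstar ≤ sqrtLasso A b lam x) (d : Fin n → ℝ) :
    |dot (A *ᵥ d) (A *ᵥ xstar - b)| ≤ (∑ i, lam i * |d i|) * norm2 (A *ᵥ xstar - b) := by
  have hdir (d : Fin n → ℝ) := neg_mul_norm2_le_dot_mulVec_residual hopt d
    (eventually_nhdsWithin_of_forall fun t (ht : 0 < t) =>
      sum_mul_abs_add_smul_le lam hlam xstar d ht.le)
  have hpos := hdir d
  have hneg := hdir (-d)
  simp only [Pi.neg_apply, abs_neg, mulVec_neg, dot_eq_dotProduct, neg_dotProduct] at hpos hneg ⊢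
  exact abs_le.2 ⟨by linarith, by linarith⟩

theorem abs_dot_col_residual_le (hlam : ∀ i, 0 ≤ lam i)
    (hopt : ∀ x, sqrtLasso A b lam xstar ≤ sqrtLasso A b lam x) (i : Fin n) :
    |dot (fun k => A k i) (A *ᵥ xstar - b)| ≤ lam i * norm2 (A *ᵥ xstar - b) := by
  have h := abs_dot_mulVec_residual_le hlam hopt (Pi.single i 1)
  simp only [mulVec_single_one, Pi.single_apply, apply_ite abs, abs_one, abs_zero, mul_ite,
    mul_one, mul_zero, Finset.sum_ite_eq', Finset.mem_univ, if_true] at h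
  exact h

/-- Compare `x*` with `(1 ± t) x*`, on which the penalty is linear in `t`. -/
theorem dot_mulVec_residual_eq (hlam : ∀ i, 0 ≤ lam i)
    (hopt : ∀ x, sqrtLasso A b lam xstar ≤ sqrtLasso A b lam x) :
    dot (A *ᵥ xstar) (A *ᵥ xstar - b) = -(∑ i, lam i * |xstar i|) * norm2 (A *ᵥ xstar - b) := by
  have hup := abs_le.1 (abs_dot_mulVec_residual_le hlam hopt xstar)
  have hshrink : ∀ᶠ t in 𝓝[>] (0 : ℝ), ∑ i, lam i * |(xstar + t • -xstar) i|
      ≤ ∑ i, lam i * |xstar i| + -(∑ i, lam i * |xstar i|) * t := by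
    filter_upwards [Ioo_mem_nhdsGT one_pos] with t ht
    have hcoef : 0 ≤ 1 - t := by linarith [ht.2]
    simp only [Pi.add_apply, Pi.smul_apply, Pi.neg_apply, smul_eq_mul]
    rw [neg_mul, ← sub_eq_add_neg, ← mul_one_sub, Finset.sum_mul]
    refine le_of_eq (Finset.sum_congr rfl fun i _ => ?_)
    rw [show xstar i + t * -xstar i = (1 - t) * xstar i by ring, abs_mul, abs_of_nonneg hcoef]
    ring
  have hdown := neg_mul_norm2_le_dot_mulVec_residual hopt (-xstar) hshrink
  simp only [mulVec_neg, dot_eq_dotProduct, neg_dotProduct] at hup hdown ⊢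
  linarith [hup.1]

end SqrtLasso

theorem dual_optimal_from_primal_optimal {m n : ℕ}
    (A : Matrix (Fin m) (Fin n) ℝ) (b : Fin m → ℝ)
    (lam : Fin n → ℝ) (hlam : ∀ i, 0 ≤ lam i)
    (xstar : Fin n → ℝ)
    (hopt : ∀ x : Fin n → ℝ,
        norm2 (A.mulVec xstar - b) + ∑ i, lam i * |xstar i|
          ≤ norm2 (A.mulVec x - b) + ∑ i, lam i * |x i|)
    (hres : A.mulVec xstar ≠ b)
    (ustar : Fin m → ℝ)
    (hustar : ustar = (norm2 (A.mulVec xstar - b))⁻¹ • (A.mulVec xstar - b)) :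
    norm2 ustar ≤ 1 ∧
    (∀ i, |dot (fun k => A k i) ustar| ≤ lam i) ∧
    -(dot b ustar) = norm2 (A.mulVec xstar - b) + ∑ i, lam i * |xstar i| ∧
    (∀ u : Fin m → ℝ, norm2 u ≤ 1 → (∀ i, |dot (fun k => A k i) u| ≤ lam i) →
      -(dot b u) ≤ -(dot b ustar)) := by
  set r := A *ᵥ xstar - b
  have hR : 0 < norm2 r := norm2_pos_iff.2 (sub_ne_zero.2 hres)
  have hdot (v : Fin m → ℝ) : dot v ustar = (norm2 r)⁻¹ * dot v r := by
    rw [hustar, dot_eq_dotProduct, dotProduct_smul, smul_eq_mul, dot_eq_dotProduct]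
  have hnorm : norm2 ustar = 1 := by
    rw [hustar, norm2_smul, abs_inv, abs_of_pos hR, inv_mul_cancel₀ hR.ne']
  have hcol (i : Fin n) : |dot (fun k => A k i) ustar| ≤ lam i := by
    rw [hdot, abs_mul, abs_inv, abs_of_pos hR, inv_mul_le_iff₀ hR]
    exact (abs_dot_col_residual_le hlam hopt i).trans_eq (mul_comm _ _)
  have hbr : dot b r = dot (A *ᵥ xstar) r - norm2 r ^ 2 := by
    rw [← dot_self_eq_norm2_sq, dot_eq_dotProduct, dot_eq_dotProduct, dot_eq_dotProduct,
      ← sub_dotProduct, sub_sub_cancel]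
  have hval : -dot b ustar = sqrtLasso A b lam xstar := by
    rw [hdot, hbr, dot_mulVec_residual_eq hlam hopt, sqrtLasso]
    field_simp
    ring
  exact ⟨hnorm.le, hcol, hval,
    fun u hu hucol => hval ▸ neg_dot_le_sqrtLasso A b lam ⟨hu, hucol⟩ xstar⟩
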